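/- The function f : ℤ_p → ℤ_p defined by f(0) = 0 and f(z p^j) = p^{j + g(j)} for z a p-adic unit, where g(k) = ⌈(log k + log log p)/log p⌉ (so that p^{−g(k)} ≈ 1/(k log p)), is strictly differentiable at every point with derivative 0 (i.e., |f(x+h) − f(x)| = o(|h|) uniformly), but is not very strongly differentiable: there is no α > 0 and constant C with |f(x+h) − f(x)| ≤ C|h|^{1+α} for all x, h ∈ ℤ_p. -/

import Mathlib

/-- `g(k) = ⌈(log k + log log p)/log p⌉`. -/
noncomputable def gExp (p : ℕ) (k : ℕ) : ℕ :=
  ⌈(Real.log k + Real.log (Real.log p)) / Real.log p⌉₊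

open scoped Classical

/-- The function `f(z p^j) = p^{j + g(j)}` for `z` a unit, `f(0) = 0`. -/
noncomputable def sawyerCounterexample (p : ℕ) [Fact p.Prime] (x : ℤ_[p]) : ℤ_[p] :=
  if x = 0 then 0
  else (p : ℤ_[p]) ^ (x.valuation + gExp p x.valuation)

section Aux

open Filter

variable (p : ℕ) [hp : Fact p.Prime]

private lemma one_lt_p : (1 : ℝ) < p := by exact_mod_cast hp.out.one_lt

private lemma p_pos : (0 : ℝ) < p := lt_trans one_pos (one_lt_p p)

/-- norm of the counterexample function at a nonzero point. -/
private lemma saw_norm {x : ℤ_[p]} (hx : x ≠ 0) :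
    ‖sawyerCounterexample p x‖ = ‖x‖ * (p : ℝ) ^ (-(gExp p x.valuation : ℤ)) := by
  rw [sawyerCounterexample, if_neg hx, PadicInt.norm_p_pow, PadicInt.norm_eq_zpow_neg_valuation hx,
    ← zpow_add₀ (ne_of_gt (p_pos p))]
  congr 1
  push_cast
  omega

private lemma saw_norm_le {G N : ℕ} (hGN : ∀ k, N ≤ k → G ≤ gExp p k)
    {y : ℤ_[p]} (hy : y ≠ 0) (hyN : ‖y‖ ≤ (p : ℝ) ^ (-(N : ℤ))) :
    ‖sawyerCounterexample p y‖ ≤ ‖y‖ * (p : ℝ) ^ (-(G : ℤ)) := by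
  have hNv : (N : ℤ) ≤ y.valuation :=
    by exact_mod_cast (PadicInt.norm_le_pow_iff_le_valuation y hy N).mp hyN
  have hNk : N ≤ y.valuation := (PadicInt.norm_le_pow_iff_le_valuation y hy N).mp hyN
  have hG : G ≤ gExp p y.valuation := hGN _ hNk
  rw [saw_norm p hy]
  refine mul_le_mul_of_nonneg_left ?_ (norm_nonneg y)
  have hGZ : (G : ℤ) ≤ (gExp p y.valuation : ℤ) := by exact_mod_cast hG
  exact zpow_le_zpow_right₀ (le_of_lt (one_lt_p p)) (neg_le_neg hGZ)

/-- `gExp p k → ∞`. -/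
private lemma gExp_large (G : ℕ) : ∃ N : ℕ, ∀ k, N ≤ k → G ≤ gExp p k := by
  have hlogp : 0 < Real.log p := Real.log_pos (one_lt_p p)
  have htend : Tendsto (fun k : ℕ => Real.log k) atTop atTop :=
    Real.tendsto_log_atTop.comp tendsto_natCast_atTop_atTop
  obtain ⟨N, hN⟩ := (htend.eventually_ge_atTop
    (G * Real.log p - Real.log (Real.log p))).exists_forall_of_atTop
  refine ⟨N, fun k hk => ?_⟩
  have h1 : (G : ℝ) ≤ (Real.log k + Real.log (Real.log p)) / Real.log p := by
    rw [le_div_iff₀ hlogp]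
    have := hN k hk
    linarith
  have h2 : (G : ℝ) ≤ (⌈(Real.log k + Real.log (Real.log p)) / Real.log p⌉₊ : ℝ) :=
    h1.trans (Nat.le_ceil _)
  exact_mod_cast h2

/-- valuation of `p^j`. -/
private lemma val_p_pow (j : ℕ) : ((p : ℤ_[p]) ^ j).valuation = j := by
  have := PadicInt.valuation_p_pow_mul (p := p) j 1 one_ne_zero
  simpa using this

end Aux

/-- `f` is strictly differentiable with derivative `0` (uniformly,
`|f(x+h)-f(x)| = o(|h|)`), but not very strongly differentiable: there is no
`α > 0` and constant `C` with `|f(x+h)-f(x)| ≤ C|h|^{1+α}` for all `x, h`. -/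
theorem strictly_but_not_very_strongly_differentiable (p : ℕ) [Fact p.Prime] :
    (∀ ε : ℝ, 0 < ε → ∃ δ : ℝ, 0 < δ ∧ ∀ x h : ℤ_[p], h ≠ 0 → ‖h‖ < δ →
      ‖sawyerCounterexample p (x + h) - sawyerCounterexample p x‖ ≤ ε * ‖h‖) ∧
    ¬ ∃ α : ℝ, 0 < α ∧ ∃ C : ℝ, ∀ x h : ℤ_[p],
      ‖sawyerCounterexample p (x + h) - sawyerCounterexample p x‖ ≤
        C * ‖h‖ ^ (1 + α) := by
  have hp1 : (1 : ℝ) < p := one_lt_p p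
  have hp0 : (0 : ℝ) < p := p_pos p
  constructor
  · -- strict differentiability
    intro ε hε
    obtain ⟨G, hGε⟩ := exists_pow_lt_of_lt_one hε (inv_lt_one_of_one_lt₀ hp1)
    have hGε' : (p : ℝ) ^ (-(G : ℤ)) ≤ ε := by
      rw [zpow_neg, zpow_natCast, ← inv_pow]
      exact le_of_lt hGε
    obtain ⟨N, hN⟩ := gExp_large p G
    refine ⟨(p : ℝ) ^ (-(N : ℤ)), zpow_pos hp0 _, fun x h hne hδ => ?_⟩
    have hh : ‖h‖ ≤ (p : ℝ) ^ (-(N : ℤ)) := le_of_lt hδ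
    -- generic bound for small nonzero y
    have key : ∀ y : ℤ_[p], y ≠ 0 → ‖y‖ ≤ ‖h‖ → ‖sawyerCounterexample p y‖ ≤ ε * ‖h‖ := by
      intro y hy hyh
      calc ‖sawyerCounterexample p y‖ ≤ ‖y‖ * (p : ℝ) ^ (-(G : ℤ)) :=
            saw_norm_le p hN hy (hyh.trans hh)
        _ ≤ ‖h‖ * ε := mul_le_mul hyh hGε' (le_of_lt (zpow_pos hp0 _)) (norm_nonneg h)
        _ = ε * ‖h‖ := mul_comm _ _
    by_cases hx : x = 0
    · subst hx
      rw [zero_add, show sawyerCounterexample p 0 = 0 from if_pos rfl, sub_zero]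
      exact key h hne le_rfl
    by_cases hxh : x + h = 0
    · rw [hxh, show sawyerCounterexample p 0 = 0 from if_pos rfl, zero_sub, norm_neg]
      have hxe : x = -h := eq_neg_of_add_eq_zero_left hxh
      have : ‖x‖ ≤ ‖h‖ := by rw [hxe, norm_neg]
      exact key x hx this
    rcases lt_or_ge ‖h‖ ‖x‖ with hlt | hle
    · -- then f(x+h) = f(x)
      have hnorm : ‖x + h‖ = ‖x‖ := by
        rw [PadicInt.norm_add_eq_max_of_ne (ne_of_gt hlt)]
        exact max_eq_left (le_of_lt hlt)
      have hval : (x + h).valuation = x.valuation := by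
        have h1 := PadicInt.norm_eq_zpow_neg_valuation (p := p) hxh
        have h2 := PadicInt.norm_eq_zpow_neg_valuation (p := p) hx
        rw [h1, h2] at hnorm
        have := zpow_right_injective₀ hp0 (ne_of_gt hp1) hnorm
        have := neg_injective this; omega
      have : sawyerCounterexample p (x + h) = sawyerCounterexample p x := by
        rw [sawyerCounterexample, sawyerCounterexample, if_neg hxh, if_neg hx, hval]
      rw [this, sub_self, norm_zero]
      positivity
    · -- ‖x‖ ≤ ‖h‖
      have hxph : ‖x + h‖ ≤ ‖h‖ :=
        (PadicInt.nonarchimedean x h).trans (max_le hle le_rfl)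
      have hb : ‖sawyerCounterexample p (x + h) - sawyerCounterexample p x‖ ≤
          max ‖sawyerCounterexample p (x + h)‖ ‖sawyerCounterexample p x‖ := by
        rw [sub_eq_add_neg]
        exact (PadicInt.nonarchimedean _ _).trans (by rw [norm_neg])
      exact hb.trans (max_le (key _ hxh hxph) (key _ hx hle))
  · -- not very strongly differentiable
    rintro ⟨α, hα, C, hC⟩
    have hlogp : 0 < Real.log p := Real.log_pos hp1
    -- Step 1: the bound forces p^(jα - g j) ≤ C for all j
    have key : ∀ j : ℕ, (p : ℝ) ^ ((j : ℝ) * α - (gExp p j : ℝ)) ≤ C := by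
      intro j
      have hpj : (p : ℤ_[p]) ^ j ≠ 0 :=
        pow_ne_zero _ (by exact_mod_cast (Fact.out : p.Prime).ne_zero)
      have hval : ((p : ℤ_[p]) ^ j).valuation = j := val_p_pow p j
      have hC' := hC 0 ((p : ℤ_[p]) ^ j)
      rw [zero_add, show sawyerCounterexample p 0 = 0 from if_pos rfl, sub_zero,
        sawyerCounterexample, if_neg hpj, hval, PadicInt.norm_p_pow,
        PadicInt.norm_p_pow] at hC'
      -- convert zpow to rpow
      have e1 : ((p : ℝ) ^ (-((j + gExp p j : ℕ) : ℤ)) : ℝ) =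
          (p : ℝ) ^ (-(j : ℝ) - (gExp p j : ℝ)) := by
        rw [← Real.rpow_intCast]
        congr 1
        push_cast
        ring
      have e2 : ((p : ℝ) ^ (-(j : ℤ)) : ℝ) ^ (1 + α) =
          (p : ℝ) ^ (-(j : ℝ) * (1 + α)) := by
        rw [← Real.rpow_intCast, ← Real.rpow_mul (le_of_lt hp0)]
        congr 1
        push_cast
        ring
      rw [e1, e2] at hC'
      rw [show (j : ℝ) * α - (gExp p j : ℝ) =
        (-(j : ℝ) - (gExp p j : ℝ)) - (-(j : ℝ) * (1 + α)) by ring,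
        Real.rpow_sub hp0, div_le_iff₀ (Real.rpow_pos_of_pos hp0 _)]
      exact hC'
    -- Step 2: the exponent tends to infinity
    have hB : ∀ j : ℕ, (gExp p j : ℝ) ≤ |Real.log j| / Real.log p +
        (|Real.log (Real.log p)| / Real.log p + 1) := by
      intro j
      set xv := (Real.log j + Real.log (Real.log p)) / Real.log p with hxv
      rcases le_or_gt xv 0 with hx | hx
      · rw [gExp, ← hxv, Nat.ceil_eq_zero.mpr hx, Nat.cast_zero]
        positivity
      · have h1 : (⌈xv⌉₊ : ℝ) < xv + 1 := Nat.ceil_lt_add_one (le_of_lt hx)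
        have h2 : xv ≤ |Real.log j| / Real.log p + |Real.log (Real.log p)| / Real.log p := by
          rw [hxv, add_div]
          gcongr <;> exact le_abs_self _
        rw [gExp, ← hxv]
        linarith
    have hev : ∀ᶠ j : ℕ in Filter.atTop,
        (α / 2) * (j : ℝ) - (|Real.log (Real.log p)| / Real.log p + 1) ≤
          (j : ℝ) * α - (gExp p j : ℝ) := by
      have hc0 : 0 < α / 2 * Real.log p := by positivity
      have hlo := Real.isLittleO_log_id_atTop.def hc0
      filter_upwards [tendsto_natCast_atTop_atTop.eventually hlo] with j hj
      simp only [Real.norm_eq_abs, id] at hj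
      have hj' : |Real.log j| ≤ α / 2 * Real.log p * (j : ℝ) := by
        calc |Real.log j| ≤ α / 2 * Real.log p * |(j : ℝ)| := hj
          _ = α / 2 * Real.log p * (j : ℝ) := by rw [abs_of_nonneg (Nat.cast_nonneg j)]
      have hdiv : |Real.log j| / Real.log p ≤ α / 2 * (j : ℝ) := by
        rw [div_le_iff₀ hlogp]
        calc |Real.log j| ≤ α / 2 * Real.log p * (j : ℝ) := hj'
          _ = α / 2 * (j : ℝ) * Real.log p := by ring
      have := hB j
      nlinarith [this, hdiv]
    have htend : Filter.Tendsto (fun j : ℕ => (j : ℝ) * α - (gExp p j : ℝ))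
        Filter.atTop Filter.atTop := by
      refine Filter.tendsto_atTop_mono' _ hev ?_
      have h1 : Filter.Tendsto (fun j : ℕ => (α / 2) * (j : ℝ)) Filter.atTop Filter.atTop :=
        (tendsto_natCast_atTop_atTop).const_mul_atTop (by positivity)
      exact Filter.tendsto_atTop_add_const_right _ _ h1
    -- Step 3: contradiction
    obtain ⟨n, hn⟩ := pow_unbounded_of_one_lt C hp1
    obtain ⟨j, hj⟩ := (htend.eventually_ge_atTop (n : ℝ)).exists
    have : C < (p : ℝ) ^ ((j : ℝ) * α - (gExp p j : ℝ)) := by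
      calc C < (p : ℝ) ^ n := hn
        _ = (p : ℝ) ^ ((n : ℕ) : ℝ) := (Real.rpow_natCast _ _).symm
        _ ≤ (p : ℝ) ^ ((j : ℝ) * α - (gExp p j : ℝ)) :=
            Real.rpow_le_rpow_left_iff hp1 |>.mpr hj
    exact absurd (key j) (not_le.mpr this)
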